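/- arXiv:2101.02265 — 5 statements merged into one kernel-verified Lean document; each statement's English description precedes it below -/
import Mathlib

section
/- A strongly connected, cycle-balanced weighted digraph on n vertices has at least 2(n−1) arcs. -/
/-- There is an arc from `i` to `j` in the weighted digraph associated with `A`
iff `i ≠ j` and `A j i > 0` (the arc `(i,j)` carries weight `a_{ji}`). -/
def Arc {n : ℕ} (A : Fin n → Fin n → ℝ) (i j : Fin n) : Prop :=
  i ≠ j ∧ 0 < A j i

/-- The weight of a cyclic list of vertices: product of weights of the arcs
`c m → c (m+1)` (indices mod `k+2`). -/
def cycWeight {n k : ℕ} (A : Fin n → Fin n → ℝ) (c : Fin (k + 2) → Fin n) : ℝ :=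
  ∏ m : Fin (k + 2), A (c (m + 1)) (c m)

/-- `c` is a directed cycle: distinct vertices, each consecutive pair (cyclically)
joined by an arc. -/
def IsCycle {n k : ℕ} (A : Fin n → Fin n → ℝ) (c : Fin (k + 2) → Fin n) : Prop :=
  Function.Injective c ∧ ∀ m, Arc A (c m) (c (m + 1))

/-- `A`'s digraph is cycle-balanced: the reversal of any directed cycle is again a
directed cycle, of the same weight. -/
def CycleBalanced {n : ℕ} (A : Fin n → Fin n → ℝ) : Prop :=
  ∀ (k : ℕ) (c : Fin (k + 2) → Fin n), IsCycle A c →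
    IsCycle A (fun m => c (-m)) ∧ cycWeight A c = cycWeight A (fun m => c (-m))

/-- Strong connectivity: from any vertex there is a directed path to any other. -/
def StronglyConnected {n : ℕ} (A : Fin n → Fin n → ℝ) : Prop :=
  ∀ i j : Fin n, Relation.ReflTransGen (Arc A) i j

/-!
An arc `i → j` together with a simple path `j ⇝ i`, which exists by strong connectivity, forms a
directed cycle; by cycle balance its reversal is a cycle too, and that reversal contains the arc
`j → i`. Hence the arcs are exactly the darts of a simple graph, which is connected, so it has at
least `n - 1` edges, that is, at least `2 (n - 1)` darts.
-/

open Relation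

theorem List.exists_nodup_isChain_cons_of_relationReflTransGen {α : Type*} {r : α → α → Prop}
    {a b : α} (h : ReflTransGen r a b) :
    ∃ l, IsChain r (a :: l) ∧ getLast (a :: l) (cons_ne_nil _ _) = b ∧ (a :: l).Nodup := by
  refine ReflTransGen.head_induction_on h ⟨[], .singleton _, rfl, nodup_singleton _⟩ ?_
  rintro a c hac - ⟨l, hch, hlast, hnd⟩
  by_cases ha : a ∈ c :: l
  · obtain ⟨p, s, hps⟩ := append_of_mem ha
    have hsuf : a :: s <:+ c :: l := ⟨p, hps.symm⟩
    refine ⟨s, hch.suffix hsuf, ?_, hnd.sublist hsuf.sublist⟩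
    simp_rw [← hlast, hps]
    exact (getLast_append_of_ne_nil _ _).symm
  · exact ⟨c :: l, .cons_cons hac hch, by rwa [getLast_cons_cons], nodup_cons.2 ⟨ha, hnd⟩⟩

theorem exists_isCycle_of_nodup_isChain {n : ℕ} {A : Fin n → Fin n → ℝ} {i j : Fin n}
    {l : List (Fin n)} (hch : (j :: l).IsChain (Arc A))
    (hlast : (j :: l).getLast (List.cons_ne_nil _ _) = i) (hnd : (j :: l).Nodup)
    (hij : Arc A i j) :
    ∃ k, ∃ c : Fin (k + 2) → Fin n, IsCycle A c ∧ c 0 = j ∧ c (-1) = i := by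
  obtain ⟨k, hk⟩ : ∃ k, l.length = k + 1 := by
    refine Nat.exists_eq_add_one.2 (List.length_pos_iff.2 ?_)
    rintro rfl
    exact hij.1 hlast.symm
  have hlast' : (j :: l)[k + 1]'(by simp [hk]) = i := by
    rw [← hlast, List.getLast_eq_getElem]; simp [hk]
  refine ⟨k, fun t => (j :: l)[(t : ℕ)]'(by simp [hk]; omega), ⟨?_, fun t => ?_⟩, rfl, ?_⟩
  · intro s t hst
    exact Fin.ext (hnd.getElem_inj_iff.1 hst)
  · rcases Fin.eq_castSucc_or_eq_last t with ⟨s, rfl⟩ | rfl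
    · rw [Fin.coeSucc_eq_succ]
      exact List.isChain_iff_getElem.1 hch s (by simp [hk]; omega)
    · simpa [Fin.last_add_one, hlast'] using hij
  · simp [Fin.coe_neg_one, hlast']

theorem StronglyConnected.arc_symm {n : ℕ} {A : Fin n → Fin n → ℝ} (hsc : StronglyConnected A)
    (hcb : CycleBalanced A) {i j : Fin n} (hij : Arc A i j) : Arc A j i := by
  obtain ⟨l, hch, hlast, hnd⟩ := List.exists_nodup_isChain_cons_of_relationReflTransGen (hsc j i)
  obtain ⟨k, c, hc, hc0, hc1⟩ := exists_isCycle_of_nodup_isChain hch hlast hnd hij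
  simpa [hc0, hc1] using (hcb k c hc).1.2 0

theorem SimpleGraph.Preconnected.two_mul_card_sub_one_le {V : Type*} [Fintype V]
    {G : SimpleGraph V} (hG : G.Preconnected) :
    2 * (Fintype.card V - 1) ≤ {p : V × V | G.Adj p.1 p.2}.ncard := by
  classical
  cases isEmpty_or_nonempty V
  · simp
  have hcard := (SimpleGraph.Connected.mk hG).card_vert_le_card_edgeSet_add_one
  rw [Nat.card_eq_fintype_card, Nat.card_eq_fintype_card, ← SimpleGraph.edgeFinset_card] at hcard
  have hdarts : 2 * G.edgeFinset.card = (Finset.univ.filter fun p : V × V => G.Adj p.1 p.2).card :=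
    G.two_mul_card_edgeFinset
  rw [Set.ncard_eq_toFinset_card', Set.toFinset_ofPred, ← hdarts]
  omega

theorem stmt_4 {n : ℕ} (A : Fin n → Fin n → ℝ)
    (hsc : StronglyConnected A) (hcb : CycleBalanced A) :
    2 * (n - 1) ≤ {p : Fin n × Fin n | Arc A p.1 p.2}.ncard := by
  let G : SimpleGraph (Fin n) :=
    { Adj := Arc A
      symm := ⟨fun _ _ => hsc.arc_symm hcb⟩
      loopless := ⟨fun _ h => h.1 rfl⟩ }
  have hG : G.Preconnected := fun i j => by
    rw [SimpleGraph.reachable_eq_reflTransGen]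
    exact hsc i j
  simpa using hG.two_mul_card_sub_one_le
end

section
/- Let G be a complete weighted digraph with n ≥ 3 vertices (a_{ij} > 0 for all i ≠ j). Then G is cycle-balanced if and only if every 3-cycle is balanced, i.e., for all distinct i, j, k: a_{ij} a_{jk} a_{ki} = a_{ik} a_{kj} a_{ji}. -/
/-!
If every triangle is balanced, then `g i := a_{i v} / a_{v i}` (for a fixed base vertex `v`)
is a potential: `a_{ij} g_j = g_i a_{ji}` whenever `i ≠ j`. Multiplying these relations
along a directed cycle, the potentials telescope away, so the cycle and its reversal have
the same weight. The converse holds because triangles are cycles of length three.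
-/

open Finset

section Potential

variable {ι K : Type*} [Field K]

theorem exists_potential_of_triangle_balanced [DecidableEq ι] (A : ι → ι → K)
    (hA : ∀ i j, i ≠ j → A i j ≠ 0)
    (h3 : ∀ i j k, i ≠ j → j ≠ k → i ≠ k → A i j * A j k * A k i = A i k * A k j * A j i)
    (v : ι) : ∃ g : ι → K, (∀ i, g i ≠ 0) ∧ ∀ i j, i ≠ j → A i j * g j = g i * A j i := by
  refine ⟨fun i => if i = v then 1 else A i v / A v i, fun i => ?_, fun i j hij => ?_⟩
  · by_cases hi : i = v
    · simp [hi]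
    · simpa [hi] using div_ne_zero (hA _ _ hi) (hA _ _ (Ne.symm hi))
  by_cases hi : i = v <;> by_cases hj : j = v
  · exact absurd (hi.trans hj.symm) hij
  · subst hi
    have := hA i j hij
    simp only [if_neg hj, if_true]
    field_simp
  · subst hj
    have := hA j i (Ne.symm hij)
    simp only [if_neg hi, if_true]
    field_simp
  · have := hA v i (Ne.symm hi)
    have := hA v j (Ne.symm hj)
    simp only [if_neg hi, if_neg hj]
    field_simp
    linear_combination h3 i j v hij hj hi

theorem prod_comp_perm_eq_of_potential {α : Type*} [Fintype α] (A : ι → ι → K) (g : ι → K)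
    (hg0 : ∀ i, g i ≠ 0) (hg : ∀ i j, i ≠ j → A i j * g j = g i * A j i)
    (σ : Equiv.Perm α) (c : α → ι) (hc : ∀ m, c (σ m) ≠ c m) :
    ∏ m, A (c (σ m)) (c m) = ∏ m, A (c m) (c (σ m)) := by
  have hshift : ∏ m, g (c (σ m)) = ∏ m, g (c m) := Equiv.prod_comp σ (g ∘ c)
  refine mul_right_cancel₀ (b := ∏ m, g (c m)) (prod_ne_zero_iff.mpr fun m _ => hg0 (c m)) ?_
  calc (∏ m, A (c (σ m)) (c m)) * ∏ m, g (c m)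
      = ∏ m, g (c (σ m)) * A (c m) (c (σ m)) := by
        rw [← prod_mul_distrib]; exact prod_congr rfl fun m _ => hg _ _ (hc m)
    _ = (∏ m, A (c m) (c (σ m))) * ∏ m, g (c m) := by
        rw [prod_mul_distrib, hshift, mul_comm]

end Potential

section Cycles

open Fin.CommRing

variable {n k : ℕ} (A : Fin n → Fin n → ℝ)

theorem cycWeight_reverse (c : Fin (k + 2) → Fin n) :
    cycWeight A (fun m => c (-m)) = ∏ m, A (c m) (c (m + 1)) := by
  refine Fintype.prod_equiv ((Equiv.addRight 1).trans (Equiv.neg _)) _ _ fun m => ?_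
  simp only [Equiv.trans_apply, Equiv.coe_addRight, Equiv.neg_apply]
  congr 2
  abel

theorem IsCycle.reverse (hpos : ∀ i j, i ≠ j → 0 < A i j) {c : Fin (k + 2) → Fin n}
    (hc : IsCycle A c) : IsCycle A (fun m => c (-m)) := by
  refine ⟨hc.1.comp neg_injective, fun m => ?_⟩
  have hne : c (-m) ≠ c (-(m + 1)) := fun h =>
    succ_ne_self m (neg_injective (hc.1 h)).symm
  exact ⟨hne, hpos _ _ hne.symm⟩

theorem isCycle_triangle (hpos : ∀ i j, i ≠ j → 0 < A i j) {i j k : Fin n}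
    (hij : i ≠ j) (hjk : j ≠ k) (hik : i ≠ k) : IsCycle A ![i, j, k] := by
  have hinj : Function.Injective ![i, j, k] := by
    intro a b hab
    fin_cases a <;> fin_cases b <;> simp_all [eq_comm]
  have hne (m : Fin 3) : ![i, j, k] (m + 1) ≠ ![i, j, k] m := hinj.ne (succ_ne_self m)
  exact ⟨hinj, fun m => ⟨(hne m).symm, hpos _ _ (hne m)⟩⟩

theorem cycWeight_triangle (i j k : Fin n) :
    cycWeight A ![i, j, k] = A j i * A k j * A i k := by
  simp [cycWeight, Fin.prod_univ_three]

end Cycles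

theorem stmt_8_general {n : ℕ} (A : Fin n → Fin n → ℝ)
    (hpos : ∀ i j, i ≠ j → 0 < A i j) :
    CycleBalanced A ↔
      ∀ i j k : Fin n, i ≠ j → j ≠ k → i ≠ k →
        A i j * A j k * A k i = A i k * A k j * A j i := by
  constructor
  · intro hB i j k hij hjk hik
    have h := (hB 1 ![i, j, k] (isCycle_triangle A hpos hij hjk hik)).2
    rw [cycWeight_triangle, cycWeight_reverse, Fin.prod_univ_three] at h
    simp only [Matrix.cons_val_zero, zero_add, Matrix.cons_val_one, Fin.reduceAdd,
      Matrix.cons_val] at h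
    linear_combination -h
  · intro h3 k c hc
    obtain ⟨g, hg0, hg⟩ :=
      exists_potential_of_triangle_balanced A (fun i j hij => (hpos i j hij).ne') h3 (c 0)
    refine ⟨hc.reverse A hpos, ?_⟩
    rw [cycWeight_reverse]
    exact prod_comp_perm_eq_of_potential A g hg0 hg (Equiv.addRight 1) c
      fun m => (hc.2 m).1.symm

theorem stmt_8 {n : ℕ} (hn : 3 ≤ n) (A : Fin n → Fin n → ℝ)
    (hpos : ∀ i j, i ≠ j → 0 < A i j) (hdiag : ∀ i, A i i = 0) :
    CycleBalanced A ↔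
      ∀ i j k : Fin n, i ≠ j → j ≠ k → i ≠ k →
        A i j * A j k * A k i = A i k * A k j * A j i :=
  stmt_8_general A hpos
end

section
/- Let L be the n×n row Laplacian matrix of a weighted digraph with off-diagonal entries L_{ij} = −a_{ij} (i ≠ j) and diagonal entries L_{ii} = Σ_{k≠i} a_{ik}, where a_{ij} ≥ 0. Let α_i be the cofactor of the i-th diagonal element of L. Then the row vector (α_1, …, α_n) is a left eigenvector of L for the eigenvalue 0, and the column vector (1, …, 1)^T is a right eigenvector of L for the eigenvalue 0. -/
/-!
The Laplacian has zero row sums, i.e. `L *ᵥ 1 = 0`; in particular `det L = 0`. The diagonal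
cofactor `α i` is the entry `adj(L) i i`, and zero row sums force every column of `adj L` to be
constant, so `α ᵥ* L` is the diagonal of `adj(L) * L = det L • 1 = 0`.
-/

namespace Matrix

variable {n R : Type*} [Fintype n] [DecidableEq n] [CommRing R] {M : Matrix n n R}

theorem det_eq_zero_of_mulVec_one_eq_zero [Nonempty n] (hM : M *ᵥ 1 = 0) : M.det = 0 := by
  have h : (M.adjugate * M) *ᵥ 1 = M.det • (1 : n → R) := by
    rw [adjugate_mul, smul_mulVec, one_mulVec]
  rw [← mulVec_mulVec, hM, mulVec_zero] at h
  simpa using congrFun h.symm (Classical.arbitrary n)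

/- Replacing row `i` by `eⱼ - eᵢ` keeps the row sums zero, so that determinant vanishes; by
linearity in row `i` it is the difference of the two cofactors. -/
theorem adjugate_apply_eq_adjugate_apply_self_of_mulVec_one_eq_zero (hM : M *ᵥ 1 = 0)
    (i j : n) : M.adjugate j i = M.adjugate i i := by
  have hrow : (M.updateRow i (Pi.single j 1 - Pi.single i 1)).det = 0 := by
    have : Nonempty n := ⟨i⟩
    apply det_eq_zero_of_mulVec_one_eq_zero
    rw [updateRow_mulVec, hM, dotProduct_one]
    simp [Finset.sum_sub_distrib]
  have hadd := det_updateRow_add M i (Pi.single j (1 : R) - Pi.single i 1) (Pi.single i 1)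
  rwa [sub_add_cancel, hrow, zero_add, ← adjugate_apply, ← adjugate_apply] at hadd

theorem vecMul_diag_adjugate_eq_zero_of_mulVec_one_eq_zero (hM : M *ᵥ 1 = 0) :
    (fun i => M.adjugate i i) ᵥ* M = 0 := by
  cases isEmpty_or_nonempty n
  · exact Subsingleton.elim _ _
  funext j
  calc ((fun i => M.adjugate i i) ᵥ* M) j = (M.adjugate * M) j j := by
        simp only [vecMul, dotProduct, mul_apply,
          ← adjugate_apply_eq_adjugate_apply_self_of_mulVec_one_eq_zero hM _ j]
    _ = 0 := by simp [adjugate_mul, det_eq_zero_of_mulVec_one_eq_zero hM]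

theorem mulVec_one_eq_zero_of_diag_eq_sum {a : n → n → R}
    (hdiag : ∀ i, M i i = ∑ k ∈ Finset.univ.filter (· ≠ i), a i k)
    (hoff : ∀ i j, i ≠ j → M i j = -a i j) : M *ᵥ 1 = 0 := by
  funext i
  have hoff_sum : ∑ j ∈ Finset.univ.erase i, M i j = -∑ k ∈ Finset.univ.filter (· ≠ i), a i k := by
    rw [← Finset.filter_ne', ← Finset.sum_neg_distrib]
    exact Finset.sum_congr rfl fun j hj => hoff i j (Finset.mem_filter.1 hj).2.symm
  rw [mulVec, dotProduct_one, Pi.zero_apply, ← Finset.add_sum_erase _ _ (Finset.mem_univ i),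
    hdiag, hoff_sum, add_neg_cancel]

theorem adjugate_fin_succ_apply_self {m : ℕ} (A : Matrix (Fin (m + 1)) (Fin (m + 1)) R)
    (i : Fin (m + 1)) : A.adjugate i i = (A.submatrix i.succAbove i.succAbove).det := by
  rw [adjugate_fin_succ_eq_det_submatrix, (Even.add_self (i : ℕ)).neg_one_pow, one_mul]

end Matrix

theorem stmt_9_general (n : ℕ) (a : Fin (n + 1) → Fin (n + 1) → ℝ)
    (L : Matrix (Fin (n + 1)) (Fin (n + 1)) ℝ)
    (hLdiag : ∀ i, L i i = ∑ k ∈ Finset.univ.filter (· ≠ i), a i k)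
    (hLoff : ∀ i j, i ≠ j → L i j = -a i j)
    (α : Fin (n + 1) → ℝ)
    (hα : ∀ i, α i = (L.submatrix i.succAbove i.succAbove).det) :
    Matrix.vecMul α L = 0 ∧ L.mulVec (fun _ => 1) = 0 := by
  have hL : L.mulVec 1 = 0 := Matrix.mulVec_one_eq_zero_of_diag_eq_sum hLdiag hLoff
  have hα' : α = fun i => L.adjugate i i := by
    funext i
    rw [hα, Matrix.adjugate_fin_succ_apply_self]
  exact ⟨hα' ▸ Matrix.vecMul_diag_adjugate_eq_zero_of_mulVec_one_eq_zero hL, hL⟩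

theorem stmt_9 (n : ℕ) (a : Fin (n + 1) → Fin (n + 1) → ℝ)
    (ha : ∀ i j, i ≠ j → 0 ≤ a i j)
    (L : Matrix (Fin (n + 1)) (Fin (n + 1)) ℝ)
    (hLdiag : ∀ i, L i i = ∑ k ∈ Finset.univ.filter (· ≠ i), a i k)
    (hLoff : ∀ i j, i ≠ j → L i j = -a i j)
    (α : Fin (n + 1) → ℝ)
    (hα : ∀ i, α i = (L.submatrix i.succAbove i.succAbove).det) :
    Matrix.vecMul α L = 0 ∧ L.mulVec (fun _ => 1) = 0 :=
  stmt_9_general n a L hLdiag hLoff α hα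
end

section
/- Let L be an irreducible connection matrix with zero column sums and let θ be the positive right eigenvector of L for eigenvalue s(L) = 0 normalized so Σθ_i = 1. If r = δθ for some δ > 0, then the unique positive equilibrium of w_i' = μ Σ_j L_{ij} w_j + w_i(r_i − w_i) is w* = r, for every μ > 0. -/
/-- Irreducibility of a matrix (as a function). -/
def MatIrreducible {n : ℕ} (L : Fin n → Fin n → ℝ) : Prop :=
  ∀ E : Set (Fin n), E.Nonempty → Eᶜ.Nonempty → ∃ i ∈ E, ∃ j ∈ Eᶜ, L i j ≠ 0

/-!
Since `L r = 0`, the vector `r` is an equilibrium. For uniqueness compare a positive equilibrium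
`w` with `r` through the ratios `w i / r i`. At an index `k` where the ratio is maximal, the
nonnegativity of the off-diagonal entries gives `(L w)_k ≤ (w k / r k) (L r)_k = 0`, so the
equation forces `w k (r k - w k) ≥ 0`, i.e. the maximal ratio is at most `1`. Symmetrically the
minimal ratio is at least `1`, hence `w = r`.
-/

open Finset

section Metzler

variable {ι : Type*} [Fintype ι] {L : ι → ι → ℝ}

lemma sum_mul_le_of_forall_div_le {v w : ι → ℝ} {k : ι} (hoff : ∀ i j, i ≠ j → 0 ≤ L i j)
    (hv : ∀ i, 0 < v i) (hk : ∀ j, w j / v j ≤ w k / v k) :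
    ∑ j, L k j * w j ≤ w k / v k * ∑ j, L k j * v j := by
  rw [mul_sum]
  refine sum_le_sum fun j _ => ?_
  rcases eq_or_ne k j with rfl | hkj
  · rw [div_mul_eq_mul_div, mul_div_assoc, mul_div_cancel_right₀ _ (hv k).ne', mul_comm]
  · calc L k j * w j ≤ L k j * (w k / v k * v j) :=
          mul_le_mul_of_nonneg_left ((div_le_iff₀ (hv j)).mp (hk j)) (hoff k j hkj)
      _ = w k / v k * (L k j * v j) := by ring

def IsEquilibrium (μ : ℝ) (L : ι → ι → ℝ) (r w : ι → ℝ) : Prop :=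
  ∀ i, μ * ∑ j, L i j * w j + w i * (r i - w i) = 0

variable {μ : ℝ} {r w : ι → ℝ}

lemma IsEquilibrium.le (heq : IsEquilibrium μ L r w) (hμ : 0 ≤ μ)
    (hoff : ∀ i j, i ≠ j → 0 ≤ L i j) (hr : ∀ i, 0 < r i) (hLr : ∀ i, ∑ j, L i j * r j = 0)
    (hw : ∀ i, 0 < w i) (i : ι) : w i ≤ r i := by
  have : Nonempty ι := ⟨i⟩
  obtain ⟨k, hk⟩ := Finite.exists_max fun j => w j / r j
  have hLw : ∑ j, L k j * w j ≤ 0 := by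
    simpa [hLr k] using sum_mul_le_of_forall_div_le hoff hr hk
  have hwk : w k ≤ r k := by nlinarith [heq k, hw k, mul_nonpos_of_nonneg_of_nonpos hμ hLw]
  have hratio : w i / r i ≤ 1 := (hk i).trans ((div_le_one (hr k)).mpr hwk)
  exact (div_le_one (hr i)).mp hratio

lemma IsEquilibrium.ge (heq : IsEquilibrium μ L r w) (hμ : 0 ≤ μ)
    (hoff : ∀ i j, i ≠ j → 0 ≤ L i j) (hr : ∀ i, 0 < r i) (hLr : ∀ i, ∑ j, L i j * r j = 0)
    (hw : ∀ i, 0 < w i) (i : ι) : r i ≤ w i := by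
  have : Nonempty ι := ⟨i⟩
  obtain ⟨k, hk⟩ := Finite.exists_min fun j => w j / r j
  -- a minimum of `w / r` is a maximum of `(-w) / r`
  have hLw : 0 ≤ ∑ j, L k j * w j := by
    have := sum_mul_le_of_forall_div_le (w := -w) hoff hr fun j => by
      simpa [neg_div] using hk j
    simpa [hLr k] using this
  have hwk : r k ≤ w k := by nlinarith [heq k, hw k, mul_nonneg hμ hLw]
  have hratio : 1 ≤ w i / r i := ((one_le_div (hr k)).mpr hwk).trans (hk i)
  exact (one_le_div (hr i)).mp hratio

end Metzler

theorem stmt_14_general (n : ℕ) (μ δ : ℝ) (hμ : 0 < μ) (hδ : 0 < δ)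
    (L : Fin n → Fin n → ℝ)
    (hoff : ∀ i j, i ≠ j → 0 ≤ L i j)
    (θ : Fin n → ℝ) (hθpos : ∀ i, 0 < θ i)
    (hθeig : ∀ i, ∑ j, L i j * θ j = 0)
    (r : Fin n → ℝ) (hrθ : ∀ i, r i = δ * θ i) :
    -- `r` is a positive equilibrium, and it is the unique one
    (∀ i, 0 < r i) ∧
    (∀ i, μ * ∑ j, L i j * r j + r i * (r i - r i) = 0) ∧
    (∀ w : Fin n → ℝ, (∀ i, 0 < w i) →
      (∀ i, μ * ∑ j, L i j * w j + w i * (r i - w i) = 0) → w = r) := by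
  have hr : ∀ i, 0 < r i := fun i => hrθ i ▸ mul_pos hδ (hθpos i)
  have hLr : ∀ i, ∑ j, L i j * r j = 0 := fun i => by
    simp_rw [hrθ, mul_left_comm _ δ, ← mul_sum, hθeig i, mul_zero]
  refine ⟨hr, fun i => by simp [hLr i], fun w hw heq => funext fun i => ?_⟩
  have heq : IsEquilibrium μ L r w := heq
  exact le_antisymm (heq.le hμ.le hoff hr hLr hw i) (heq.ge hμ.le hoff hr hLr hw i)

theorem stmt_14 (n : ℕ) (μ δ : ℝ) (hμ : 0 < μ) (hδ : 0 < δ)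
    (L : Fin n → Fin n → ℝ)
    (hoff : ∀ i j, i ≠ j → 0 ≤ L i j)
    (hcol : ∀ j, ∑ i, L i j = 0)
    (hirr : MatIrreducible L)
    (θ : Fin n → ℝ) (hθpos : ∀ i, 0 < θ i)
    (hθeig : ∀ i, ∑ j, L i j * θ j = 0) (hθnorm : ∑ i, θ i = 1)
    (r : Fin n → ℝ) (hrθ : ∀ i, r i = δ * θ i) :
    -- `r` is a positive equilibrium, and it is the unique one
    (∀ i, 0 < r i) ∧
    (∀ i, μ * ∑ j, L i j * r j + r i * (r i - r i) = 0) ∧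
    (∀ w : Fin n → ℝ, (∀ i, 0 < w i) →
      (∀ i, μ * ∑ j, L i j * w j + w i * (r i - w i) = 0) → w = r) :=
  stmt_14_general n μ δ hμ hδ L hoff θ hθpos hθeig r hrθ
end

section
/- Suppose bc = 1 and the two single-species equilibria satisfy w*(μ_u, p) = c · w*(μ_v, q) componentwise. Then for every ρ ∈ [0,1], the pair (ρ w*(μ_u, p), (1−ρ) w*(μ_u, p)/c) is an equilibrium of the two-species competition patch system u_i' = μ_u Σ_j L_{ij} u_j + u_i(p_i − u_i − c v_i), v_i' = μ_v Σ_j L_{ij} v_j + v_i(q_i − b u_i − v_i). -/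
def IsPatchEquilibrium {ι R : Type*} [Fintype ι] [CommRing R]
    (μ : R) (L : ι → ι → R) (r w : ι → R) : Prop :=
  ∀ i, μ * ∑ j, L i j * w j + w i * (r i - w i) = 0

section

variable {ι R : Type*} [Fintype ι] [CommRing R] {μ : R} {L : ι → ι → R} {r w : ι → R}

theorem IsPatchEquilibrium.scaled (hw : IsPatchEquilibrium μ L r w) (s : R) (i : ι) :
    μ * ∑ j, L i j * (s * w j) + s * w i * (r i - w i) = 0 := by
  have hsum : ∑ j, L i j * (s * w j) = s * ∑ j, L i j * w j := by
    rw [Finset.mul_sum]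
    exact Finset.sum_congr rfl fun j _ => by ring
  rw [hsum]
  linear_combination s * hw i

end

theorem stmt_16_general (n : ℕ) (μu μv b c : ℝ) (hc : 0 < c)
    (hbc : b * c = 1)
    (L : Fin n → Fin n → ℝ)
    (p q : Fin n → ℝ)
    (wu wv : Fin n → ℝ)
    (hwu : ∀ i, μu * ∑ j, L i j * wu j + wu i * (p i - wu i) = 0)
    (hwv : ∀ i, μv * ∑ j, L i j * wv j + wv i * (q i - wv i) = 0)
    (hwuv : ∀ i, wu i = c * wv i) :
    ∀ ρ ∈ Set.Icc (0 : ℝ) 1,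
      (∀ i, μu * ∑ j, L i j * (ρ * wu j) +
        (ρ * wu i) * (p i - ρ * wu i - c * ((1 - ρ) * wu i / c)) = 0) ∧
      (∀ i, μv * ∑ j, L i j * ((1 - ρ) * wu j / c) +
        ((1 - ρ) * wu i / c) * (q i - b * (ρ * wu i) - (1 - ρ) * wu i / c) = 0) := by
  intro ρ _
  obtain rfl : wu = fun j => c * wv j := funext hwuv
  have hcancel : ∀ j, (1 - ρ) * (c * wv j) / c = (1 - ρ) * wv j := fun j => by
    field_simp
  simp only [hcancel]
  refine ⟨fun i => ?_, fun i => ?_⟩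
  · linear_combination IsPatchEquilibrium.scaled (r := p) hwu ρ i
  · -- the competition term `b ρ wu = b c ρ wv = ρ wv` restores the crowding factor `q - wv`
    linear_combination IsPatchEquilibrium.scaled hwv (1 - ρ) i - ρ * (1 - ρ) * wv i ^ 2 * hbc

theorem stmt_16 (n : ℕ) (μu μv b c : ℝ) (hb : 0 < b) (hc : 0 < c)
    (hbc : b * c = 1)
    (L : Fin n → Fin n → ℝ)
    (hoff : ∀ i j, i ≠ j → 0 ≤ L i j)
    (hcol : ∀ j, ∑ i, L i j = 0)
    (hirr : MatIrreducible L)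
    (p q : Fin n → ℝ) (hp : ∀ i, 0 < p i) (hq : ∀ i, 0 < q i)
    (wu wv : Fin n → ℝ)
    (hwupos : ∀ i, 0 < wu i)
    (hwu : ∀ i, μu * ∑ j, L i j * wu j + wu i * (p i - wu i) = 0)
    (hwvpos : ∀ i, 0 < wv i)
    (hwv : ∀ i, μv * ∑ j, L i j * wv j + wv i * (q i - wv i) = 0)
    (hwuv : ∀ i, wu i = c * wv i) :
    ∀ ρ ∈ Set.Icc (0 : ℝ) 1,
      (∀ i, μu * ∑ j, L i j * (ρ * wu j) +
        (ρ * wu i) * (p i - ρ * wu i - c * ((1 - ρ) * wu i / c)) = 0) ∧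
      (∀ i, μv * ∑ j, L i j * ((1 - ρ) * wu j / c) +
        ((1 - ρ) * wu i / c) * (q i - b * (ρ * wu i) - (1 - ρ) * wu i / c) = 0) :=
  stmt_16_general n μu μv b c hc hbc L p q wu wv hwu hwv hwuv
end
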